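/- Work in dimension d = 1, with the setup: n ≥ 2, real numbers a_1 < b_1 < a_2 < b_2 < … < a_n < b_n, μ_k the uniform probability measure on [a_k, b_k], and Q_n = (1/n)·Σ_{i=1}^n μ_i. Write t_k = (k−1)/(n−1). Then for 1 < k < n and every t ∈ [0,1], the point curve depth at the point a_k + t·(b_k − a_k) satisfies D(a_k + t(b_k − a_k) | Q_n, μ_k) = (t + (n−1)t_k)/(n t) if t ≥ t_k, and = (1 − t + (n−1)(1−t_k))/(n(1−t)) if t < t_k; and for k ∈ {1, n} and every t ∈ (0,1), D(a_k + t(b_k − a_k) | Q_n, μ_k) = 1/n. (Pointwise depth formula for the segments-on-a-line example, Section S6.1 of the supplementary material.) -/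
import Mathlib


open MeasureTheory Set Filter
open scoped ENNReal

noncomputable section

/-- Point curve depth in dimension `d = 1`: the unit sphere is `{−1, 1}` and the
closed halfspaces through `x` are the rays `(−∞, x]` and `[x, ∞)`. -/
def pointDepth1 (Q μ : Measure ℝ) (x : ℝ) : ℝ≥0∞ :=
  min (Q (Set.Iic x) / μ (Set.Iic x)) (Q (Set.Ici x) / μ (Set.Ici x))

/-- The uniform probability measure on `[a, b]` (normalized Lebesgue measure). -/
def unif (a b : ℝ) : Measure ℝ :=
  (ENNReal.ofReal (b - a))⁻¹ • volume.restrict (Set.Icc a b)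

lemma unif_Iic (a b x : ℝ) (h : a < b) :
    unif a b (Set.Iic x) = ENNReal.ofReal ((min x b - a) / (b - a)) := by
  have hS : Set.Iic x ∩ Set.Icc a b = Set.Icc a (min x b) := by
    ext y; simp only [Set.mem_inter_iff, Set.mem_Iic, Set.mem_Icc, le_min_iff]; tauto
  rw [unif, Measure.smul_apply, Measure.restrict_apply measurableSet_Iic, hS,
    Real.volume_Icc, smul_eq_mul, ENNReal.ofReal_div_of_pos (by linarith),
    ENNReal.div_eq_inv_mul]

lemma unif_Ici (a b x : ℝ) (h : a < b) :
    unif a b (Set.Ici x) = ENNReal.ofReal ((b - max x a) / (b - a)) := by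
  have hS : Set.Ici x ∩ Set.Icc a b = Set.Icc (max x a) b := by
    ext y; simp only [Set.mem_inter_iff, Set.mem_Ici, Set.mem_Icc, max_le_iff]; tauto
  rw [unif, Measure.smul_apply, Measure.restrict_apply measurableSet_Ici, hS,
    Real.volume_Icc, smul_eq_mul, ENNReal.ofReal_div_of_pos (by linarith),
    ENNReal.div_eq_inv_mul]

lemma unif_Iic_one (a b x : ℝ) (h : a < b) (hx : b ≤ x) : unif a b (Set.Iic x) = 1 := by
  rw [unif_Iic a b x h, min_eq_right hx, div_self (by linarith), ENNReal.ofReal_one]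

lemma unif_Iic_zero (a b x : ℝ) (h : a < b) (hx : x ≤ a) : unif a b (Set.Iic x) = 0 := by
  rw [unif_Iic a b x h, ENNReal.ofReal_eq_zero]
  apply div_nonpos_of_nonpos_of_nonneg (by have := min_le_left x b; linarith [min_le_left x b]) (by linarith)

lemma unif_Ici_one (a b x : ℝ) (h : a < b) (hx : x ≤ a) : unif a b (Set.Ici x) = 1 := by
  rw [unif_Ici a b x h, max_eq_right hx, div_self (by linarith), ENNReal.ofReal_one]

lemma unif_Ici_zero (a b x : ℝ) (h : a < b) (hx : b ≤ x) : unif a b (Set.Ici x) = 0 := by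
  rw [unif_Ici a b x h, ENNReal.ofReal_eq_zero]
  apply div_nonpos_of_nonpos_of_nonneg (by simp [le_max_iff]; left; linarith) (by linarith)

lemma unif_Iic_t (a b t : ℝ) (h : a < b) (ht0 : 0 ≤ t) (ht1 : t ≤ 1) :
    unif a b (Set.Iic (a + t * (b - a))) = ENNReal.ofReal t := by
  rw [unif_Iic a b _ h]
  have : min (a + t * (b - a)) b = a + t * (b - a) := min_eq_left (by nlinarith)
  rw [this]
  congr 1
  rw [add_sub_cancel_left, mul_div_assoc, div_self (by linarith), mul_one]

lemma unif_Ici_t (a b t : ℝ) (h : a < b) (ht0 : 0 ≤ t) (ht1 : t ≤ 1) :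
    unif a b (Set.Ici (a + t * (b - a))) = ENNReal.ofReal (1 - t) := by
  rw [unif_Ici a b _ h]
  have : max (a + t * (b - a)) a = a + t * (b - a) := max_eq_left (by nlinarith)
  rw [this]
  congr 1
  have hba : b - a ≠ 0 := by linarith
  field_simp
  ring

lemma chain (n : ℕ) (a b : ℕ → ℝ)
    (hab : ∀ k, 1 ≤ k → k ≤ n → a k < b k)
    (hord : ∀ k, 1 ≤ k → k < n → b k < a (k + 1)) :
    ∀ i j, 1 ≤ i → i < j → j ≤ n → b i < a j := by
  intro i j hi
  induction j with
  | zero => omega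
  | succ m ih =>
    intro hij hjn
    rcases Nat.lt_or_ge i m with h | h
    · have h0 := ih h (by omega)
      have h1 : a m < b m := hab m (by omega) (by omega)
      have h2 : b m < a (m+1) := hord m (by omega) (by omega)
      linarith
    · have : i = m := by omega
      subst this
      exact hord i hi (by omega)

lemma smul_div_helper (n : ℕ) (hn : n ≠ 0) (A B : ℝ) (hB : 0 ≤ B) :
    (n:ℝ≥0∞)⁻¹ * ENNReal.ofReal A / ENNReal.ofReal B
      = ENNReal.ofReal A / ENNReal.ofReal ((n:ℝ) * B) := by
  rw [ENNReal.ofReal_mul (by positivity), ENNReal.ofReal_natCast]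
  rw [div_eq_mul_inv, div_eq_mul_inv,
    ENNReal.mul_inv (Or.inl (by simpa using hn)) (Or.inl (by simp))]
  ring

lemma key (n k : ℕ) (hn : 2 ≤ n) (hk1 : 1 ≤ k) (hkn : k ≤ n) (a b : ℕ → ℝ)
    (hab : ∀ k, 1 ≤ k → k ≤ n → a k < b k)
    (hord : ∀ k, 1 ≤ k → k < n → b k < a (k + 1))
    (t : ℝ) (ht0 : 0 ≤ t) (ht1 : t ≤ 1) :
    pointDepth1 ((n : ℝ≥0∞)⁻¹ • ∑ i ∈ Finset.Icc 1 n, unif (a i) (b i))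
        (unif (a k) (b k)) (a k + t * (b k - a k)) =
      min (ENNReal.ofReal ((k:ℝ) - 1 + t) / ENNReal.ofReal ((n:ℝ) * t))
          (ENNReal.ofReal ((n:ℝ) - k + 1 - t) / ENNReal.ofReal ((n:ℝ) * (1 - t))) := by
  set x := a k + t * (b k - a k) with hx
  have habk : a k < b k := hab k hk1 hkn
  have hax : a k ≤ x := by nlinarith
  have hxb : x ≤ b k := by nlinarith
  have hlow : ∀ i, 1 ≤ i → i < k → b i ≤ x :=
    fun i h1 h2 => le_trans (chain n a b hab hord i k h1 h2 hkn).le hax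
  have hhigh : ∀ i, k < i → i ≤ n → x ≤ a i :=
    fun i h1 h2 => le_trans hxb (chain n a b hab hord k i hk1 h1 h2).le
  have hsplit1 : Finset.Icc 1 n = Finset.Ico 1 k ∪ Finset.Icc k n := by
    ext i; simp only [Finset.mem_Icc, Finset.mem_union, Finset.mem_Ico]; omega
  have hdisj1 : Disjoint (Finset.Ico 1 k) (Finset.Icc k n) := by
    simp only [Finset.disjoint_left, Finset.mem_Ico, Finset.mem_Icc]; omega
  have hsplit2 : Finset.Icc 1 n = Finset.Icc 1 k ∪ Finset.Icc (k+1) n := by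
    ext i; simp only [Finset.mem_Icc, Finset.mem_union]; omega
  have hdisj2 : Disjoint (Finset.Icc 1 k) (Finset.Icc (k+1) n) := by
    simp only [Finset.disjoint_left, Finset.mem_Icc]; omega
  have hsum1 : ∑ i ∈ Finset.Icc 1 n, unif (a i) (b i) (Set.Iic x)
      = (↑(k-1) : ℝ≥0∞) + ENNReal.ofReal t := by
    rw [hsplit1, Finset.sum_union hdisj1]
    have e1 : ∑ i ∈ Finset.Ico 1 k, unif (a i) (b i) (Set.Iic x) = (↑(k-1) : ℝ≥0∞) := by
      have hone : ∀ i ∈ Finset.Ico 1 k, unif (a i) (b i) (Set.Iic x) = 1 := by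
        intro i hi
        rw [Finset.mem_Ico] at hi
        exact unif_Iic_one (a i) (b i) x (hab i hi.1 (by omega)) (hlow i hi.1 hi.2)
      rw [Finset.sum_congr rfl hone, Finset.sum_const, Nat.card_Ico, nsmul_eq_mul, mul_one]
    have e2 : ∑ i ∈ Finset.Icc k n, unif (a i) (b i) (Set.Iic x) = ENNReal.ofReal t := by
      rw [Finset.sum_eq_single_of_mem k (by simp [hk1, hkn]) (fun i hi hne => by
        rw [Finset.mem_Icc] at hi
        exact unif_Iic_zero (a i) (b i) x (hab i (by omega) hi.2)
          (hhigh i (by omega) hi.2))]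
      rw [hx]; exact unif_Iic_t _ _ _ habk ht0 ht1
    rw [e1, e2]
  have hsum2 : ∑ i ∈ Finset.Icc 1 n, unif (a i) (b i) (Set.Ici x)
      = (↑(n-k) : ℝ≥0∞) + ENNReal.ofReal (1 - t) := by
    rw [hsplit2, Finset.sum_union hdisj2]
    have e1 : ∑ i ∈ Finset.Icc 1 k, unif (a i) (b i) (Set.Ici x) = ENNReal.ofReal (1-t) := by
      rw [Finset.sum_eq_single_of_mem k (by simp [hk1, hkn]) (fun i hi hne => by
        rw [Finset.mem_Icc] at hi
        exact unif_Ici_zero (a i) (b i) x (hab i hi.1 (by omega))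
          (hlow i hi.1 (by omega)))]
      rw [hx]; exact unif_Ici_t _ _ _ habk ht0 ht1
    have e2 : ∑ i ∈ Finset.Icc (k+1) n, unif (a i) (b i) (Set.Ici x) = (↑(n-k) : ℝ≥0∞) := by
      have hone : ∀ i ∈ Finset.Icc (k+1) n, unif (a i) (b i) (Set.Ici x) = 1 := by
        intro i hi
        rw [Finset.mem_Icc] at hi
        exact unif_Ici_one (a i) (b i) x (hab i (by omega) hi.2) (hhigh i (by omega) hi.2)
      rw [Finset.sum_congr rfl hone, Finset.sum_const, Nat.card_Icc, nsmul_eq_mul, mul_one]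
      congr 1
      omega
    rw [e1, e2, add_comm]
  have hQi : ((n : ℝ≥0∞)⁻¹ • ∑ i ∈ Finset.Icc 1 n, unif (a i) (b i)) (Set.Iic x)
      = (n : ℝ≥0∞)⁻¹ * ENNReal.ofReal ((k:ℝ) - 1 + t) := by
    rw [Measure.smul_apply, Measure.coe_finset_sum, Finset.sum_apply, hsum1, smul_eq_mul]
    congr 1
    rw [← ENNReal.ofReal_natCast, ← ENNReal.ofReal_add (by positivity) ht0]
    congr 1
    have : ((k-1 : ℕ):ℝ) = (k:ℝ) - 1 := by
      push_cast [Nat.cast_sub hk1]; ring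
    rw [this]
  have hQc : ((n : ℝ≥0∞)⁻¹ • ∑ i ∈ Finset.Icc 1 n, unif (a i) (b i)) (Set.Ici x)
      = (n : ℝ≥0∞)⁻¹ * ENNReal.ofReal ((n:ℝ) - k + 1 - t) := by
    rw [Measure.smul_apply, Measure.coe_finset_sum, Finset.sum_apply, hsum2, smul_eq_mul]
    congr 1
    rw [← ENNReal.ofReal_natCast, ← ENNReal.ofReal_add (by positivity) (by linarith)]
    congr 1
    have : ((n-k : ℕ):ℝ) = (n:ℝ) - k := by
      push_cast [Nat.cast_sub hkn]; ring
    rw [this]; ring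
  have hμi : unif (a k) (b k) (Set.Iic x) = ENNReal.ofReal t := by
    rw [hx]; exact unif_Iic_t _ _ _ habk ht0 ht1
  have hμc : unif (a k) (b k) (Set.Ici x) = ENNReal.ofReal (1 - t) := by
    rw [hx]; exact unif_Ici_t _ _ _ habk ht0 ht1
  rw [pointDepth1, hQi, hQc, hμi, hμc,
    smul_div_helper n (by omega) _ t ht0,
    smul_div_helper n (by omega) _ (1-t) (by linarith)]

/-- Pointwise depth formula for the segments-on-a-line example (Section S6.1 of the
supplementary material): with `t_k = (k−1)/(n−1)`, at the point `a_k + t(b_k − a_k)`,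
for `1 < k < n` the point curve depth equals `(t + (n−1)t_k)/(n t)` when `t ≥ t_k` and
`(1 − t + (n−1)(1−t_k))/(n(1−t))` when `t < t_k`; for `k ∈ {1, n}` and `t ∈ (0,1)`
it equals `1/n`. -/
theorem segments_on_line_pointDepth
    (n : ℕ) (hn : 2 ≤ n) (a b : ℕ → ℝ)
    (hab : ∀ k, 1 ≤ k → k ≤ n → a k < b k)
    (hord : ∀ k, 1 ≤ k → k < n → b k < a (k + 1)) :
    (∀ k, 1 < k → k < n → ∀ t ∈ Set.Icc (0:ℝ) 1,
      ((((k : ℝ) - 1) / ((n : ℝ) - 1) ≤ t →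
        pointDepth1 ((n : ℝ≥0∞)⁻¹ • ∑ i ∈ Finset.Icc 1 n, unif (a i) (b i))
            (unif (a k) (b k)) (a k + t * (b k - a k)) =
          ENNReal.ofReal ((t + ((n : ℝ) - 1) * (((k : ℝ) - 1) / ((n : ℝ) - 1))) /
            ((n : ℝ) * t))) ∧
      (t < ((k : ℝ) - 1) / ((n : ℝ) - 1) →
        pointDepth1 ((n : ℝ≥0∞)⁻¹ • ∑ i ∈ Finset.Icc 1 n, unif (a i) (b i))
            (unif (a k) (b k)) (a k + t * (b k - a k)) =
          ENNReal.ofReal ((1 - t + ((n : ℝ) - 1) * (1 - ((k : ℝ) - 1) / ((n : ℝ) - 1))) /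
            ((n : ℝ) * (1 - t)))))) ∧
    (∀ k, k = 1 ∨ k = n → ∀ t ∈ Set.Ioo (0:ℝ) 1,
      pointDepth1 ((n : ℝ≥0∞)⁻¹ • ∑ i ∈ Finset.Icc 1 n, unif (a i) (b i))
          (unif (a k) (b k)) (a k + t * (b k - a k)) = (n : ℝ≥0∞)⁻¹) := by
  have hn1 : (0:ℝ) < (n:ℝ) - 1 := by
    have : (2:ℝ) ≤ n := by exact_mod_cast hn
    linarith
  have hnpos : (0:ℝ) < n := by linarith
  constructor
  · intro k hk1 hkn t ht
    obtain ⟨ht0, ht1⟩ := ht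
    have hkR : (1:ℝ) < (k:ℝ) := by exact_mod_cast hk1
    have hknR : (k:ℝ) < n := by exact_mod_cast hkn
    have hkey := key n k hn (by omega) (by omega) a b hab hord t ht0 ht1
    have htk_pos : 0 < ((k:ℝ) - 1) / ((n:ℝ) - 1) := div_pos (by linarith) hn1
    constructor
    · intro hle
      -- t ≥ t_k, so t > 0
      have ht_pos : 0 < t := lt_of_lt_of_le htk_pos hle
      have hnum : t + ((n:ℝ) - 1) * (((k:ℝ) - 1) / ((n:ℝ) - 1)) = (k:ℝ) - 1 + t := by
        rw [mul_div_cancel₀ _ hn1.ne']; ring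
      rw [hkey, hnum]
      have hF : ENNReal.ofReal ((k:ℝ) - 1 + t) / ENNReal.ofReal ((n:ℝ) * t)
          = ENNReal.ofReal (((k:ℝ) - 1 + t) / ((n:ℝ) * t)) :=
        (ENNReal.ofReal_div_of_pos (mul_pos hnpos ht_pos)).symm
      have hineq : (k:ℝ) - 1 ≤ t * ((n:ℝ) - 1) := (div_le_iff₀ hn1).mp hle
      rcases eq_or_lt_of_le ht1 with h1 | h1
      · -- t = 1 : second term is ∞
        have : ENNReal.ofReal ((n:ℝ) - k + 1 - t) / ENNReal.ofReal ((n:ℝ) * (1 - t)) = ⊤ := by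
          rw [h1] at *
          rw [show (n:ℝ) * (1 - (1:ℝ)) = 0 by ring, ENNReal.ofReal_zero, ENNReal.div_zero]
          rw [ne_eq, ENNReal.ofReal_eq_zero]
          push_neg
          linarith
        rw [this, min_eq_left le_top, hF]
      · -- t < 1
        have hG : ENNReal.ofReal ((n:ℝ) - k + 1 - t) / ENNReal.ofReal ((n:ℝ) * (1 - t))
            = ENNReal.ofReal (((n:ℝ) - k + 1 - t) / ((n:ℝ) * (1 - t))) :=
          (ENNReal.ofReal_div_of_pos (by nlinarith)).symm
        rw [hF, hG, min_eq_left]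
        apply ENNReal.ofReal_le_ofReal
        rw [div_le_div_iff₀ (mul_pos hnpos ht_pos) (by nlinarith)]
        nlinarith
    · intro hlt
      have htk_le : ((k:ℝ) - 1) / ((n:ℝ) - 1) ≤ 1 := by
        rw [div_le_one hn1]; linarith
      have ht_lt1 : t < 1 := lt_of_lt_of_le hlt htk_le
      have hnum : 1 - t + ((n:ℝ) - 1) * (1 - ((k:ℝ) - 1) / ((n:ℝ) - 1)) = (n:ℝ) - k + 1 - t := by
        rw [mul_sub, mul_one, mul_div_cancel₀ _ hn1.ne']; ring
      rw [hkey, hnum]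
      have hG : ENNReal.ofReal ((n:ℝ) - k + 1 - t) / ENNReal.ofReal ((n:ℝ) * (1 - t))
          = ENNReal.ofReal (((n:ℝ) - k + 1 - t) / ((n:ℝ) * (1 - t))) :=
        (ENNReal.ofReal_div_of_pos (by nlinarith)).symm
      have hineq : t * ((n:ℝ) - 1) < (k:ℝ) - 1 := (lt_div_iff₀ hn1).mp hlt
      rcases eq_or_lt_of_le ht0 with h0 | h0
      · -- t = 0 : first term is ∞
        have : ENNReal.ofReal ((k:ℝ) - 1 + t) / ENNReal.ofReal ((n:ℝ) * t) = ⊤ := by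
          rw [← h0]
          rw [show (n:ℝ) * (0:ℝ) = 0 by ring, ENNReal.ofReal_zero, ENNReal.div_zero]
          rw [ne_eq, ENNReal.ofReal_eq_zero]
          push_neg
          linarith
        rw [this, min_eq_right le_top, hG]
      · have hF : ENNReal.ofReal ((k:ℝ) - 1 + t) / ENNReal.ofReal ((n:ℝ) * t)
            = ENNReal.ofReal (((k:ℝ) - 1 + t) / ((n:ℝ) * t)) :=
          (ENNReal.ofReal_div_of_pos (mul_pos hnpos h0)).symm
        rw [hF, hG, min_eq_right]
        apply ENNReal.ofReal_le_ofReal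
        rw [div_le_div_iff₀ (by nlinarith) (mul_pos hnpos h0)]
        nlinarith
  · intro k hk t ht
    obtain ⟨ht0, ht1⟩ := ht
    have hinv : (n : ℝ≥0∞)⁻¹ = ENNReal.ofReal (1 / (n:ℝ)) := by
      rw [one_div, ENNReal.ofReal_inv_of_pos hnpos, ENNReal.ofReal_natCast]
    rcases hk with rfl | rfl
    · have hkey := key n 1 hn le_rfl (by omega) a b hab hord t ht0.le ht1.le
      rw [hkey]
      have hF : ENNReal.ofReal (((1:ℕ):ℝ) - 1 + t) / ENNReal.ofReal ((n:ℝ) * t)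
          = ENNReal.ofReal ((((1:ℕ):ℝ) - 1 + t) / ((n:ℝ) * t)) :=
        (ENNReal.ofReal_div_of_pos (mul_pos hnpos ht0)).symm
      have hG : ENNReal.ofReal ((n:ℝ) - ((1:ℕ):ℝ) + 1 - t) / ENNReal.ofReal ((n:ℝ) * (1 - t))
          = ENNReal.ofReal (((n:ℝ) - ((1:ℕ):ℝ) + 1 - t) / ((n:ℝ) * (1 - t))) :=
        (ENNReal.ofReal_div_of_pos (by nlinarith)).symm
      rw [hF, hG, min_eq_left, hinv]
      · congr 1
        rw [div_eq_div_iff (mul_pos hnpos ht0).ne' hnpos.ne']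
        push_cast
        ring
      · apply ENNReal.ofReal_le_ofReal
        rw [div_le_div_iff₀ (mul_pos hnpos ht0) (by nlinarith)]
        push_cast
        nlinarith [mul_nonneg (mul_nonneg hnpos.le ht0.le) (by linarith : (0:ℝ) ≤ (n:ℝ) - 1)]
    · have hkey := key k k hn (by omega) le_rfl a b hab hord t ht0.le ht1.le
      rw [hkey]
      have hF : ENNReal.ofReal ((k:ℝ) - 1 + t) / ENNReal.ofReal ((k:ℝ) * t)
          = ENNReal.ofReal (((k:ℝ) - 1 + t) / ((k:ℝ) * t)) :=
        (ENNReal.ofReal_div_of_pos (mul_pos hnpos ht0)).symm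
      have hG : ENNReal.ofReal ((k:ℝ) - (k:ℝ) + 1 - t) / ENNReal.ofReal ((k:ℝ) * (1 - t))
          = ENNReal.ofReal (((k:ℝ) - (k:ℝ) + 1 - t) / ((k:ℝ) * (1 - t))) :=
        (ENNReal.ofReal_div_of_pos (by nlinarith)).symm
      rw [hF, hG, min_eq_right, hinv]
      · congr 1
        rw [div_eq_div_iff (by nlinarith : ((k:ℝ) * (1 - t)) ≠ 0) hnpos.ne']
        ring
      · apply ENNReal.ofReal_le_ofReal
        rw [div_le_div_iff₀ (by nlinarith) (mul_pos hnpos ht0)]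
        nlinarith [mul_nonneg (mul_nonneg hnpos.le (by linarith : (0:ℝ) ≤ 1 - t)) (by linarith : (0:ℝ) ≤ (k:ℝ) - 1)]
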